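/- arXiv:2201.12973 — 4 statements merged into one kernel-verified Lean document; each statement's English description precedes it below -/
import Mathlib

section
/- Fix integers k, P ≥ 1, scalars c_i ∈ ℝ, vectors b^(i) ∈ ℝ^k with all components nonnegative for i = 1,…,P, and a vector z^(0) ∈ ℝ^k. Define G : [0,1)^k → ℝ^P componentwise by G_i(a) = c_i · ∏_{j=1}^k exp( −b_j^(i)·( a_j/(1−a_j) + z_j^(0) ) ). Then G is L-Lipschitz on [0,1)^k with respect to the Euclidean norms, with L = √(Pk)·max_{i,j} L_{i,j}, where L_{i,j} = |c_i|·b_j^(i)·exp(−(b^(i))ᵀ z^(0))·g(b_j^(i)) if b_j^(i) > 0, L_{i,j} = 0 if b_j^(i) = 0, and g(b) = 1 for b ≥ 2 while g(b) = (4/b²)·e^{b−2} for 0 < b < 2. -/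
/-!
Each coordinate of `G` is `cᵢ e^{-bᵀz⁽⁰⁾}` times a product of one-variable factors
`φ_b(x) = exp (-b x / (1 - x))` bounded by `1`, so telescoping the product gives
`|Gᵢ(a¹) - Gᵢ(a²)| ≤ ∑ⱼ Lᵢⱼ |a¹ⱼ - a²ⱼ|` as soon as `φ_b` is `b g(b)`-Lipschitz on `[0,1)`.
In the variable `u = 1 / (1 - x) ≥ 1` one has `|φ_b'(x)| = b u² e^{-b(u-1)}`, and `u ≤ e^{u-1}`
(applied to `u` when `b ≥ 2`, to `b u / 2` when `b < 2`) bounds `u² e^{-b(u-1)}` by `g(b)`.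
Cauchy–Schwarz, `∑ⱼ |a¹ⱼ - a²ⱼ| ≤ √k ‖a¹ - a²‖`, and `‖v‖ ≤ √P maxᵢ |vᵢ|` then give the constant.
-/

noncomputable section

/-- Euclidean norm of a vector in `ℝ^n`. -/
def norm2 {n : ℕ} (x : Fin n → ℝ) : ℝ := Real.sqrt (∑ i, x i ^ 2)

/-- The box `[0,1)^k`. -/
def box (k : ℕ) : Set (Fin k → ℝ) := {a | ∀ j, a j ∈ Set.Ico (0 : ℝ) 1}

/-- The auxiliary function `g` of Lemma `G-Lip`: `g(b) = 1` for `b ≥ 2`, and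
`g(b) = (4/b²) e^{b-2}` for `0 < b < 2`. -/
def gaux (b : ℝ) : ℝ := if 2 ≤ b then 1 else 4 / b ^ 2 * Real.exp (b - 2)

open Real Finset

lemma gaux_nonneg (b : ℝ) : 0 ≤ gaux b := by
  unfold gaux
  split_ifs <;> positivity

lemma sq_mul_exp_neg_le_gaux {b u : ℝ} (hb : 0 < b) (hu : 1 ≤ u) :
    u ^ 2 * exp (-(b * (u - 1))) ≤ gaux b := by
  rw [exp_neg, ← div_eq_mul_inv, div_le_iff₀ (exp_pos _)]
  have le_exp_sub_one : ∀ x : ℝ, x ≤ exp (x - 1) := fun x => by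
    linarith [add_one_le_exp (x - 1)]
  unfold gaux
  split_ifs with h2b
  · calc u ^ 2 ≤ exp (u - 1) ^ 2 := pow_le_pow_left₀ (by linarith) (le_exp_sub_one u) 2
      _ = exp (2 * (u - 1)) := by rw [← exp_nat_mul]; norm_num
      _ ≤ 1 * exp (b * (u - 1)) := by rw [one_mul]; gcongr
  · calc u ^ 2 = 4 / b ^ 2 * (b * u / 2) ^ 2 := by field_simp; norm_num
      _ ≤ 4 / b ^ 2 * exp (b * u / 2 - 1) ^ 2 := by
          gcongr
          exact le_exp_sub_one _
      _ = 4 / b ^ 2 * exp (b - 2) * exp (b * (u - 1)) := by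
          rw [← exp_nat_mul, mul_assoc, ← exp_add]
          congr 2
          push_cast
          ring

lemma hasDerivAt_exp_neg_mul_div_one_sub (b z : ℝ) {x : ℝ} (hx : x ≠ 1) :
    HasDerivAt (fun x => exp (-(b * (x / (1 - x) + z))))
      (exp (-(b * (x / (1 - x) + z))) * -(b * ((1 - x) ^ 2)⁻¹)) x := by
  have hx' : 1 - x ≠ 0 := sub_ne_zero.2 hx.symm
  have hfrac : HasDerivAt (fun x : ℝ => x / (1 - x)) ((1 - x) ^ 2)⁻¹ x :=
    ((hasDerivAt_id' x).div ((hasDerivAt_id' x).const_sub 1) hx').congr_deriv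
      (by field_simp; ring)
  exact (((hfrac.add_const z).const_mul b).neg).exp

lemma abs_exp_neg_mul_div_one_sub_le {b : ℝ} (z : ℝ) (hb : 0 ≤ b) {x : ℝ}
    (hx : x ∈ Set.Ico 0 1) :
    |exp (-(b * (x / (1 - x) + z)))| ≤ exp (-(b * z)) := by
  rw [abs_of_pos (exp_pos _), exp_le_exp]
  have := mul_nonneg hb (div_nonneg hx.1 (sub_nonneg.2 hx.2.le))
  linarith

lemma abs_exp_neg_mul_div_one_sub_sub_le {b : ℝ} (z : ℝ) (hb : 0 ≤ b) {x y : ℝ}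
    (hx : x ∈ Set.Ico 0 1) (hy : y ∈ Set.Ico 0 1) :
    |exp (-(b * (x / (1 - x) + z))) - exp (-(b * (y / (1 - y) + z)))| ≤
      exp (-(b * z)) * (b * gaux b * |x - y|) := by
  have hderiv : ∀ w ∈ Set.Ico (0 : ℝ) 1,
      ‖exp (-(b * (w / (1 - w) + z))) * -(b * ((1 - w) ^ 2)⁻¹)‖ ≤
        exp (-(b * z)) * (b * gaux b) := by
    intro w hw
    set u := (1 - w)⁻¹ with hu_def
    have hw1 : 0 < 1 - w := sub_pos.2 hw.2
    have hu : 1 ≤ u := one_le_inv₀ hw1 |>.2 (by linarith [hw.1])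
    have hwu : w / (1 - w) = u - 1 := by rw [hu_def]; field_simp; ring
    rw [norm_mul, norm_neg, Real.norm_of_nonneg (exp_pos _).le,
      Real.norm_of_nonneg (by positivity), hwu, ← inv_pow,
      show -(b * (u - 1 + z)) = -(b * z) + -(b * (u - 1)) by ring, exp_add]
    calc exp (-(b * z)) * exp (-(b * (u - 1))) * (b * u ^ 2)
        = exp (-(b * z)) * (b * (u ^ 2 * exp (-(b * (u - 1))))) := by ring
      _ ≤ exp (-(b * z)) * (b * gaux b) := by
          rcases hb.eq_or_lt with rfl | hb
          · simp
          · gcongr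
            exact sq_mul_exp_neg_le_gaux hb hu
  have := (convex_Ico (0 : ℝ) 1).norm_image_sub_le_of_norm_hasDerivWithin_le
    (fun w hw => (hasDerivAt_exp_neg_mul_div_one_sub b z hw.2.ne).hasDerivWithinAt) hderiv hy hx
  simpa only [Real.norm_eq_abs, mul_assoc] using this

lemma abs_prod_sub_prod_le {ι : Type*} [Fintype ι] {f g B ε : ι → ℝ}
    (hf : ∀ j, |f j| ≤ B j) (hg : ∀ j, |g j| ≤ B j) (hfg : ∀ j, |f j - g j| ≤ B j * ε j) :
    |∏ j, f j - ∏ j, g j| ≤ (∏ j, B j) * ∑ j, ε j := by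
  classical
  have h := (ContinuousMultilinearMap.mkPiAlgebra ℝ ι ℝ).norm_image_sub_le' f g
  simp only [ContinuousMultilinearMap.norm_mkPiAlgebra, one_mul,
    ContinuousMultilinearMap.mkPiAlgebra_apply, Real.norm_eq_abs] at h
  refine h.trans ?_
  rw [mul_sum]
  refine sum_le_sum fun i _ => ?_
  calc ∏ j, (if j = i then |f i - g i| else max |f j| |g j|)
      ≤ ∏ j, B j * (if j = i then ε i else 1) := by
        refine prod_le_prod (fun j _ => by split_ifs <;> positivity) (fun j _ => ?_)
        split_ifs with hji
        · subst hji; exact hfg j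
        · simpa using max_le (hf j) (hg j)
    _ = (∏ j, B j) * ε i := by
        rw [prod_mul_distrib, prod_ite_eq', if_pos (Finset.mem_univ i)]

lemma abs_mul_prod_exp_sub_le {ι : Type*} [Fintype ι] (c : ℝ) {b : ι → ℝ}
    (hb : ∀ j, 0 ≤ b j) (z : ι → ℝ) {a₁ a₂ : ι → ℝ}
    (ha₁ : ∀ j, a₁ j ∈ Set.Ico 0 1) (ha₂ : ∀ j, a₂ j ∈ Set.Ico 0 1) :
    |c * ∏ j, exp (-(b j * (a₁ j / (1 - a₁ j) + z j))) -
        c * ∏ j, exp (-(b j * (a₂ j / (1 - a₂ j) + z j)))| ≤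
      ∑ j, |c| * b j * exp (-(∑ m, b m * z m)) * gaux (b j) * |a₁ j - a₂ j| := by
  have hprod := abs_prod_sub_prod_le (ε := fun j => b j * gaux (b j) * |a₁ j - a₂ j|)
    (fun j => abs_exp_neg_mul_div_one_sub_le (z j) (hb j) (ha₁ j))
    (fun j => abs_exp_neg_mul_div_one_sub_le (z j) (hb j) (ha₂ j))
    (fun j => abs_exp_neg_mul_div_one_sub_sub_le (z j) (hb j) (ha₁ j) (ha₂ j))
  have hB : ∏ j, exp (-(b j * z j)) = exp (-(∑ m, b m * z m)) := by
    rw [← exp_sum, sum_neg_distrib]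
  rw [hB] at hprod
  rw [← mul_sub, abs_mul]
  calc |c| * |∏ j, exp (-(b j * (a₁ j / (1 - a₁ j) + z j))) -
        ∏ j, exp (-(b j * (a₂ j / (1 - a₂ j) + z j)))|
      ≤ |c| * (exp (-(∑ m, b m * z m)) * ∑ j, b j * gaux (b j) * |a₁ j - a₂ j|) := by gcongr
    _ = _ := by rw [mul_sum, mul_sum]; exact sum_congr rfl fun j _ => by ring

lemma norm2_le_sqrt_card_mul {n : ℕ} {x : Fin n → ℝ} {C : ℝ} (h : ∀ i, |x i| ≤ C) :
    norm2 x ≤ √n * C := by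
  obtain _ | n := n
  · simp [norm2]
  have hC : 0 ≤ C := (abs_nonneg _).trans (h 0)
  rw [norm2, ← sqrt_sq hC, ← sqrt_mul (Nat.cast_nonneg _)]
  gcongr
  calc ∑ i, x i ^ 2 ≤ ∑ _i : Fin (n + 1), C ^ 2 :=
        sum_le_sum fun i _ => sq_le_sq' (abs_le.1 (h i)).1 (abs_le.1 (h i)).2
    _ = (n + 1 : ℕ) * C ^ 2 := by simp

lemma sum_abs_le_sqrt_card_mul_norm2 {n : ℕ} (x : Fin n → ℝ) : ∑ i, |x i| ≤ √n * norm2 x := by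
  rw [norm2, ← sqrt_mul (Nat.cast_nonneg _)]
  refine le_sqrt_of_sq_le ?_
  simpa using sq_sum_le_card_mul_sum_sq (s := univ) (f := fun i => |x i|)

theorem stmt_6_general {k P : ℕ}
    (c : Fin P → ℝ) (b : Fin P → Fin k → ℝ) (hb : ∀ i j, 0 ≤ b i j)
    (z₀ : Fin k → ℝ)
    (G : (Fin k → ℝ) → Fin P → ℝ)
    (hG : ∀ a i, G a i = c i * ∏ j, Real.exp (-(b i j * (a j / (1 - a j) + z₀ j))))
    (L : Fin P → Fin k → ℝ)
    (hL : ∀ i j, L i j =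
      if 0 < b i j then
        |c i| * b i j * Real.exp (-(∑ m, b i m * z₀ m)) * gaux (b i j)
      else 0) :
    ∀ a₁ ∈ box k, ∀ a₂ ∈ box k,
      norm2 (G a₁ - G a₂) ≤
        Real.sqrt ((P : ℝ) * k) * (⨆ ij : Fin P × Fin k, L ij.1 ij.2) *
          norm2 (a₁ - a₂) := by
  intro a₁ ha₁ a₂ ha₂
  set M := ⨆ ij : Fin P × Fin k, L ij.1 ij.2
  have hL' : ∀ i j, L i j = |c i| * b i j * exp (-(∑ m, b i m * z₀ m)) * gaux (b i j) := by
    intro i j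
    rw [hL, ite_eq_left_iff, not_lt]
    intro hb0
    simp [le_antisymm hb0 (hb i j)]
  have hLM : ∀ i j, L i j ≤ M := fun i j =>
    le_ciSup (f := fun ij : Fin P × Fin k => L ij.1 ij.2) (Set.finite_range _).bddAbove (i, j)
  have hM : 0 ≤ M := Real.iSup_nonneg fun ij => by
    rw [hL']; exact mul_nonneg (by have := hb ij.1 ij.2; positivity) (gaux_nonneg _)
  have hcoord : ∀ i, |(G a₁ - G a₂) i| ≤ M * (√k * norm2 (a₁ - a₂)) := fun i => calc
    |(G a₁ - G a₂) i| ≤ ∑ j, L i j * |a₁ j - a₂ j| := by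
        rw [Pi.sub_apply, hG, hG]
        simpa only [hL'] using abs_mul_prod_exp_sub_le (c i) (hb i) z₀ ha₁ ha₂
    _ ≤ ∑ j, M * |a₁ j - a₂ j| := by gcongr with j; exact hLM i j
    _ ≤ M * (√k * norm2 (a₁ - a₂)) := by
        rw [← mul_sum]; gcongr; exact sum_abs_le_sqrt_card_mul_norm2 _
  calc norm2 (G a₁ - G a₂) ≤ √P * (M * (√k * norm2 (a₁ - a₂))) :=
        norm2_le_sqrt_card_mul hcoord
    _ = √(P * k) * M * norm2 (a₁ - a₂) := by rw [sqrt_mul (Nat.cast_nonneg _)]; ring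

/-- Lemma `G-Lip`: the exponential-decay generative model
`G_i(a) = c_i ∏_j exp(-b_j^{(i)} (a_j/(1-a_j) + z_j^{(0)}))` is `L`-Lipschitz on
`[0,1)^k` with `L = √(Pk) max_{i,j} L_{i,j}`. -/
theorem stmt_6 {k P : ℕ} (hk : 1 ≤ k) (hP : 1 ≤ P)
    (c : Fin P → ℝ) (b : Fin P → Fin k → ℝ) (hb : ∀ i j, 0 ≤ b i j)
    (z₀ : Fin k → ℝ)
    (G : (Fin k → ℝ) → Fin P → ℝ)
    (hG : ∀ a i, G a i = c i * ∏ j, Real.exp (-(b i j * (a j / (1 - a j) + z₀ j))))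
    (L : Fin P → Fin k → ℝ)
    (hL : ∀ i j, L i j =
      if 0 < b i j then
        |c i| * b i j * Real.exp (-(∑ m, b i m * z₀ m)) * gaux (b i j)
      else 0) :
    ∀ a₁ ∈ box k, ∀ a₂ ∈ box k,
      norm2 (G a₁ - G a₂) ≤
        Real.sqrt ((P : ℝ) * k) * (⨆ ij : Fin P × Fin k, L ij.1 ij.2) *
          norm2 (a₁ - a₂) :=
  stmt_6_general c b hb z₀ G hG L hL
end
end

section
/- Let S ⊆ ℝ^P, γ > 0, δ ≥ 0, and let A ∈ ℝ^{N×P} be a matrix that (i) satisfies the S-REC(S, γ, δ) and (ii) satisfies ‖Az‖₂ ≤ 2‖z‖₂ for all z ∈ ℝ^P. For any x* ∈ ℝ^P and η ∈ ℝ^N, let u = A x* + η. If x̂ ∈ S and ε > 0 satisfy ‖u − A x̂‖₂ ≤ inf_{x ∈ S} ‖u − A x‖₂ + ε, then ‖x̂ − x*‖₂ ≤ (4/γ + 1)·inf_{x ∈ S} ‖x* − x‖₂ + 2‖η‖₂/γ + ε/γ + δ/γ. -/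
/-!
Fix any `x ∈ S`. Near-optimality of `x̂` and `‖A z‖ ≤ 2‖z‖` give
`‖A (x̂ - x)‖ ≤ ‖u - A x̂‖ + ‖u - A x‖ ≤ 2 (2‖x* - x‖ + ‖η‖) + ε`; the S-REC turns this into a
bound on `γ ‖x̂ - x‖`, and the triangle inequality through `x` bounds `‖x̂ - x*‖`. Taking the
infimum over `x ∈ S` gives the claim.
-/

noncomputable section

/-- Set-Restricted Eigenvalue Condition: `‖A(x₁-x₂)‖₂ ≥ γ‖x₁-x₂‖₂ - δ` for all `x₁,x₂ ∈ S`. -/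
def SREC {N P : ℕ} (A : Matrix (Fin N) (Fin P) ℝ) (S : Set (Fin P → ℝ)) (γ δ : ℝ) : Prop :=
  ∀ x₁ ∈ S, ∀ x₂ ∈ S, γ * norm2 (x₁ - x₂) - δ ≤ norm2 (A.mulVec (x₁ - x₂))

open Set WithLp

lemma norm2_eq_norm_toLp {n : ℕ} (x : Fin n → ℝ) : norm2 x = ‖toLp 2 x‖ := by
  simp [EuclideanSpace.norm_eq, norm2, sq_abs]

lemma norm2_nonneg {n : ℕ} (x : Fin n → ℝ) : 0 ≤ norm2 x :=
  Real.sqrt_nonneg _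

lemma le_mul_csInf_image_add {α : Type*} {f : α → ℝ} {s : Set α} {a k c : ℝ}
    (hs : s.Nonempty) (hk : 0 < k) (h : ∀ x ∈ s, a ≤ k * f x + c) :
    a ≤ k * sInf (f '' s) + c := by
  have : (a - c) / k ≤ sInf (f '' s) :=
    le_csInf (hs.image f) <| forall_mem_image.2 fun x hx => by
      rw [div_le_iff₀' hk]; linarith [h x hx]
  linarith [(div_le_iff₀' hk).1 this]

section AlmostMinimizer

variable {E F 𝓕 : Type*} [SeminormedAddCommGroup E] [SeminormedAddCommGroup F]
  [FunLike 𝓕 E F] [AddMonoidHomClass 𝓕 E F]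

theorem norm_sub_le_of_almost_minimizer {A : 𝓕} {γ δ L ε : ℝ} (hγ : 0 < γ)
    {xstar xhat x : E} {η u : F} (hu : u = A xstar + η)
    (hrec : γ * ‖xhat - x‖ - δ ≤ ‖A (xhat - x)‖)
    (hA : ‖A (xstar - x)‖ ≤ L * ‖xstar - x‖)
    (hopt : ‖u - A xhat‖ ≤ ‖u - A x‖ + ε) :
    ‖xhat - xstar‖ ≤ (2 * L / γ + 1) * ‖xstar - x‖ + 2 * ‖η‖ / γ + ε / γ + δ / γ := by
  have h_meas : ‖A (xhat - x)‖ ≤ ‖u - A xhat‖ + ‖u - A x‖ := by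
    simpa only [map_sub, dist_eq_norm] using dist_triangle_left (A xhat) (A x) u
  have h_res : ‖u - A x‖ ≤ L * ‖xstar - x‖ + ‖η‖ := by
    rw [hu, show A xstar + η - A x = A (xstar - x) + η by rw [map_sub]; abel]
    exact (norm_add_le _ _).trans (by linarith)
  have h_dist : γ * ‖xhat - x‖ ≤ 2 * L * ‖xstar - x‖ + 2 * ‖η‖ + ε + δ := by linarith
  calc ‖xhat - xstar‖ ≤ ‖xhat - x‖ + ‖xstar - x‖ := by
        simpa only [dist_eq_norm] using dist_triangle_right xhat xstar x
    _ ≤ (2 * L * ‖xstar - x‖ + 2 * ‖η‖ + ε + δ) / γ + ‖xstar - x‖ := by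
      gcongr; rwa [le_div_iff₀' hγ]
    _ = _ := by field_simp; ring

end AlmostMinimizer

theorem stmt_11_general {N P : ℕ} (S : Set (Fin P → ℝ)) (γ δ : ℝ) (hγ : 0 < γ)
    (A : Matrix (Fin N) (Fin P) ℝ)
    (hSREC : SREC A S γ δ)
    (hA : ∀ z : Fin P → ℝ, norm2 (A.mulVec z) ≤ 2 * norm2 z)
    (xstar : Fin P → ℝ) (η : Fin N → ℝ) (u : Fin N → ℝ)
    (hu : u = A.mulVec xstar + η)
    (xhat : Fin P → ℝ) (hxhat : xhat ∈ S) (ε : ℝ)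
    (hopt : norm2 (u - A.mulVec xhat) ≤
      sInf ((fun x => norm2 (u - A.mulVec x)) '' S) + ε) :
    norm2 (xhat - xstar) ≤
      (4 / γ + 1) * sInf ((fun x => norm2 (xstar - x)) '' S)
        + 2 * norm2 η / γ + ε / γ + δ / γ := by
  have hbdd : BddBelow ((fun x => norm2 (u - A.mulVec x)) '' S) :=
    ⟨0, forall_mem_image.2 fun _ _ => norm2_nonneg _⟩
  rw [add_assoc, add_assoc]
  refine le_mul_csInf_image_add ⟨xhat, hxhat⟩ (by positivity) fun x hx => ?_
  have hopt_x := hopt.trans (add_le_add_left (csInf_le hbdd (mem_image_of_mem _ hx)) ε)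
  have := norm_sub_le_of_almost_minimizer (A := Matrix.toLpLin 2 2 A) (L := 2) hγ
    (xstar := toLp 2 xstar) (xhat := toLp 2 xhat) (x := toLp 2 x) (η := toLp 2 η)
    (congrArg (toLp 2) hu)
    (by simpa [norm2_eq_norm_toLp, Matrix.mulVec_sub] using hSREC xhat hxhat x hx)
    (by simpa [norm2_eq_norm_toLp, Matrix.mulVec_sub] using hA (xstar - x))
    (by simpa [norm2_eq_norm_toLp, Matrix.mulVec_sub] using hopt_x)
  simp only [norm2_eq_norm_toLp, toLp_sub] at this ⊢
  linarith

/-- Lemma 4.3 of Bora et al., deterministic form. -/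
theorem stmt_11 {N P : ℕ} (S : Set (Fin P → ℝ)) (γ δ : ℝ) (hγ : 0 < γ) (hδ : 0 ≤ δ)
    (A : Matrix (Fin N) (Fin P) ℝ)
    (hSREC : SREC A S γ δ)
    (hA : ∀ z : Fin P → ℝ, norm2 (A.mulVec z) ≤ 2 * norm2 z)
    (xstar : Fin P → ℝ) (η : Fin N → ℝ) (u : Fin N → ℝ)
    (hu : u = A.mulVec xstar + η)
    (xhat : Fin P → ℝ) (hxhat : xhat ∈ S) (ε : ℝ) (hε : 0 < ε)
    (hopt : norm2 (u - A.mulVec xhat) ≤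
      sInf ((fun x => norm2 (u - A.mulVec x)) '' S) + ε) :
    norm2 (xhat - xstar) ≤
      (4 / γ + 1) * sInf ((fun x => norm2 (xstar - x)) '' S)
        + 2 * norm2 η / γ + ε / γ + δ / γ :=
  stmt_11_general S γ δ hγ A hSREC hA xstar η u hu xhat hxhat ε hopt
end
end

section
/- Let A be an N×P random matrix whose entries are independent Gaussian random variables with mean 0 and variance 1/N. Then for every fixed nonzero x ∈ ℝ^P and every ε ≥ 0: if 0 ≤ ε ≤ 1, then P( |‖Ax‖₂²/‖x‖₂² − 1| ≥ ε ) ≤ 2·e^{−Nε²/8}; and if ε > 1, then P( |‖Ax‖₂²/‖x‖₂² − 1| ≥ ε ) ≤ 2·e^{−Nε/8}. -/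
/-!
Row `i` of `A` contributes `(A x)ᵢ = ∑ⱼ Aᵢⱼ xⱼ`, a centred Gaussian of variance `‖x‖₂² / N`, and
distinct rows are independent, so `N ‖A x‖₂² / ‖x‖₂²` is a `χ²` variable with `N` degrees of
freedom. Its moment generating function is `(1 - 2t)^(-N/2)`, and Chernoff's bound with
`t = ε / (2(1 + ε))` for the upper tail and `t = -ε/4` for the lower tail gives
`exp (-N (ε - log (1 + ε)) / 2)` and `exp (-N ε² / 8)`. Elementary estimates of `log (1 + ε)`
bound the first by `exp (-N ε² / 8)` when `ε ≤ 1` and by `exp (-N ε / 8)` when `ε ≥ 1`.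
-/

open MeasureTheory ProbabilityTheory

noncomputable section

/-- Law of a random `N × P` matrix with i.i.d. `N(0, 1/N)` entries: the product of
Gaussian measures over the index set. -/
def gaussianMatrixMeasure (N P : ℕ) : Measure (Fin N × Fin P → ℝ) :=
  Measure.pi fun _ => gaussianReal 0 (N : NNReal)⁻¹

open Real
open scoped NNReal Matrix

theorem sq_norm2 {n : ℕ} (x : Fin n → ℝ) : norm2 x ^ 2 = ∑ i, x i ^ 2 :=
  sq_sqrt (by positivity)

theorem map_pi_gaussianReal_dotProduct {ι : Type*} [Fintype ι] (v : ℝ≥0) (c : ι → ℝ) :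
    (Measure.pi fun _ : ι => gaussianReal 0 v).map (· ⬝ᵥ c)
      = gaussianReal 0 ((∑ j, c j ^ 2).toNNReal * v) := by
  set μ := Measure.pi fun _ : ι => gaussianReal 0 v
  have hlaw : HasGaussianLaw (fun ω => ∑ j, c j * ω j) μ :=
    iIndepFun.hasGaussianLaw_fun_sum
      (fun j => ((measurePreserving_eval _ j).hasLaw.hasGaussianLaw).fun_smul (c j))
      (iIndepFun_pi (X := fun j (r : ℝ) => c j * r) fun j => by fun_prop)
  have hmean : ∫ ω, ∑ j, c j * ω j ∂μ = 0 := by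
    rw [integral_finsetSum _ fun j _ =>
      (integrable_eval ((memLp_id_gaussianReal' 1 (by simp)).integrable le_rfl)).const_mul _]
    simp [μ, integral_const_mul, integral_eval]
  have hvar : Var[fun ω => ∑ j, c j * ω j; μ] = ∑ j, c j ^ 2 * v := by
    have := variance_sum_pi (μ := fun _ : ι => gaussianReal 0 v) (X := fun j (r : ℝ) => c j * r)
      (fun j => (memLp_id_gaussianReal 2).const_mul (c j))
    simp only [Finset.sum_fn] at this
    refine this.trans (Finset.sum_congr rfl fun j _ => ?_)
    exact (variance_const_mul (c j) (fun r => r) _).trans (by rw [variance_fun_id_gaussianReal])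
  have hdot : (· ⬝ᵥ c) = fun ω : ι → ℝ => ∑ j, c j * ω j := funext fun ω => dotProduct_comm ω c
  rw [hdot, hlaw.map_eq_gaussianReal, hmean, hvar, ← Finset.sum_mul,
    Real.toNNReal_mul (by positivity)]
  simp

theorem MeasureTheory.Measure.pi_map_curry {ι κ X : Type*} [Fintype ι] [Fintype κ]
    [MeasurableSpace X] (μ : ι → κ → Measure X) [∀ i j, IsProbabilityMeasure (μ i j)] :
    (Measure.pi fun p : ι × κ => μ p.1 p.2).map Function.curry
      = Measure.pi fun i => Measure.pi fun j => μ i j := by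
  simp_rw [← Measure.infinitePi_eq_pi]
  exact Measure.infinitePi_map_curry μ

instance {N P : ℕ} : IsProbabilityMeasure (gaussianMatrixMeasure N P) := by
  unfold gaussianMatrixMeasure
  infer_instance

theorem measurable_mulVec_of {N P : ℕ} (x : Fin P → ℝ) :
    Measurable fun ω : Fin N × Fin P → ℝ => (Matrix.of fun i j => ω (i, j)) *ᵥ x := by
  refine measurable_pi_lambda _ fun i => ?_
  simp only [Matrix.mulVec, dotProduct, Matrix.of_apply]
  fun_prop

theorem map_gaussianMatrixMeasure_mulVec {N P : ℕ} (x : Fin P → ℝ) :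
    (gaussianMatrixMeasure N P).map (fun ω => (Matrix.of fun i j => ω (i, j)) *ᵥ x)
      = Measure.pi fun _ : Fin N => gaussianReal 0 ((∑ j, x j ^ 2).toNNReal * (N : ℝ≥0)⁻¹) := by
  have hcurry : (fun ω : Fin N × Fin P → ℝ => (Matrix.of fun i j => ω (i, j)) *ᵥ x)
      = (fun A i => A i ⬝ᵥ x) ∘ Function.curry := rfl
  rw [hcurry, ← Measure.map_map (by fun_prop) measurable_curry, gaussianMatrixMeasure,
    Measure.pi_map_curry (fun _ _ => gaussianReal 0 (N : ℝ≥0)⁻¹),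
    Measure.pi_map_pi (f := fun _ A => A ⬝ᵥ x) fun _ => by fun_prop]
  simp_rw [map_pi_gaussianReal_dotProduct]

section SquaredGaussian

variable {v : ℝ≥0} {t : ℝ}

theorem gaussianPDFReal_mul_exp_mul_sq (hv : v ≠ 0) (y : ℝ) :
    gaussianPDFReal 0 v y * exp (t * y ^ 2)
      = (√(2 * π * v))⁻¹ * exp (-((2 * v : ℝ)⁻¹ - t) * y ^ 2) := by
  have hv' : (v : ℝ) ≠ 0 := NNReal.coe_ne_zero.mpr hv
  rw [gaussianPDFReal, mul_assoc, ← exp_add]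
  congr 2
  field_simp
  ring

theorem integral_exp_mul_sq_gaussianReal (h : 2 * t * v < 1) :
    ∫ y, exp (t * y ^ 2) ∂gaussianReal 0 v = (√(1 - 2 * t * v))⁻¹ := by
  rcases eq_or_ne v 0 with rfl | hv
  · simp
  have hv' : (0 : ℝ) < v := NNReal.coe_pos.mpr (pos_iff_ne_zero.mpr hv)
  have hb : 0 < (2 * v : ℝ)⁻¹ - t := by
    rw [sub_pos, inv_eq_one_div, lt_div_iff₀ (by positivity)]
    linarith
  have h1 : 0 < 1 - 2 * t * v := by linarith
  rw [integral_gaussianReal_eq_integral_smul hv]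
  simp_rw [smul_eq_mul, gaussianPDFReal_mul_exp_mul_sq hv, integral_const_mul, integral_gaussian]
  rw [← sqrt_inv, ← sqrt_mul (by positivity), ← sqrt_inv]
  congr 1
  field_simp

variable {ι : Type*} [Fintype ι]

theorem integral_exp_mul_sum_sq_pi_gaussianReal (h : 2 * t * v < 1) :
    ∫ y, exp (t * ∑ i, y i ^ 2) ∂(Measure.pi fun _ : ι => gaussianReal 0 v)
      = exp (-(Fintype.card ι / 2 * log (1 - 2 * t * v))) := by
  simp_rw [Finset.mul_sum, exp_sum]
  rw [integral_fintype_prod_eq_pow (fun y => exp (t * y ^ 2)), integral_exp_mul_sq_gaussianReal h]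
  have h1 : 0 < 1 - 2 * t * v := by linarith
  rw [sqrt_eq_rpow, ← rpow_neg h1.le, ← rpow_mul_natCast h1.le, rpow_def_of_pos h1]
  ring_nf

theorem integrable_exp_mul_sum_sq_pi_gaussianReal (h : 2 * t * v < 1) :
    Integrable (fun y => exp (t * ∑ i, y i ^ 2)) (Measure.pi fun _ : ι => gaussianReal 0 v) :=
  Integrable.of_integral_ne_zero (by rw [integral_exp_mul_sum_sq_pi_gaussianReal h]; positivity)

theorem measureReal_le_sum_sq_le (ht : 0 ≤ t) (h : 2 * t * v < 1) (a : ℝ) :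
    (Measure.pi fun _ : ι => gaussianReal 0 v).real {y | a ≤ ∑ i, y i ^ 2}
      ≤ exp (-t * a - Fintype.card ι / 2 * log (1 - 2 * t * v)) :=
  (measure_ge_le_exp_mul_mgf a ht (integrable_exp_mul_sum_sq_pi_gaussianReal h)).trans_eq <| by
    rw [mgf, integral_exp_mul_sum_sq_pi_gaussianReal h, ← exp_add, ← sub_eq_add_neg]

theorem measureReal_sum_sq_le_le (ht : t ≤ 0) (a : ℝ) :
    (Measure.pi fun _ : ι => gaussianReal 0 v).real {y | ∑ i, y i ^ 2 ≤ a}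
      ≤ exp (-t * a - Fintype.card ι / 2 * log (1 - 2 * t * v)) := by
  have h : 2 * t * v < 1 := by nlinarith [v.coe_nonneg]
  refine (measure_le_le_exp_mul_mgf a ht
    (integrable_exp_mul_sum_sq_pi_gaussianReal h)).trans_eq ?_
  rw [mgf, integral_exp_mul_sum_sq_pi_gaussianReal h, ← exp_add, ← sub_eq_add_neg]

end SquaredGaussian

section ChernoffExponents

variable {n ε : ℝ}

theorem exp_add_exp_le_two_mul_exp_sq (hn : 0 ≤ n) (h0 : 0 ≤ ε) (h1 : ε ≤ 1) :
    exp (-(n * (ε - log (1 + ε)) / 2)) + exp (-(n * ε ^ 2 / 8)) ≤ 2 * exp (-(n * ε ^ 2 / 8)) := by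
  have hexp := quadratic_le_exp_of_nonneg (x := ε - ε ^ 2 / 4) (by nlinarith)
  have hlog : log (1 + ε) ≤ ε - ε ^ 2 / 4 := by
    rw [log_le_iff_le_exp (by linarith)]
    nlinarith [sq_nonneg ε, sq_nonneg (1 - ε), mul_nonneg (mul_nonneg h0 h0) (sub_nonneg.2 h1)]
  have : exp (-(n * (ε - log (1 + ε)) / 2)) ≤ exp (-(n * ε ^ 2 / 8)) :=
    exp_le_exp.mpr (by nlinarith)
  linarith

theorem exp_add_exp_le_two_mul_exp (hn : 0 ≤ n) (h1 : 1 ≤ ε) :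
    exp (-(n * (ε - log (1 + ε)) / 2)) + exp (-(n * ε ^ 2 / 8)) ≤ 2 * exp (-(n * ε / 8)) := by
  have hexp := quadratic_le_exp_of_nonneg (x := 3 * ε / 4) (by linarith)
  have hlog : log (1 + ε) ≤ 3 * ε / 4 := by
    rw [log_le_iff_le_exp (by linarith)]
    nlinarith
  have hεε : ε ≤ ε ^ 2 := by nlinarith
  have : exp (-(n * (ε - log (1 + ε)) / 2)) ≤ exp (-(n * ε / 8)) :=
    exp_le_exp.mpr (by nlinarith)
  have : exp (-(n * ε ^ 2 / 8)) ≤ exp (-(n * ε / 8)) :=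
    exp_le_exp.mpr (by nlinarith [mul_le_mul_of_nonneg_left hεε hn])
  linarith

end ChernoffExponents

theorem sub_sq_le_log_one_add {ε : ℝ} (hε : 0 ≤ ε) : ε - ε ^ 2 ≤ log (1 + ε) := by
  refine le_trans ?_ (one_sub_inv_le_log_of_pos (by linarith))
  have h1 : 1 - (1 + ε)⁻¹ = ε / (1 + ε) := by field_simp; ring
  rw [h1, le_div_iff₀ (by linarith)]
  nlinarith [pow_nonneg hε 3]

section ChiSquaredTails

variable {ι : Type*} [Fintype ι] {v : ℝ≥0} {ε : ℝ}

theorem measureReal_one_add_mul_le_sum_sq_le (hv : v ≠ 0) (hε : 0 ≤ ε) :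
    (Measure.pi fun _ : ι => gaussianReal 0 v).real
        {y | (1 + ε) * (Fintype.card ι * v) ≤ ∑ i, y i ^ 2}
      ≤ exp (-(Fintype.card ι * (ε - log (1 + ε)) / 2)) := by
  have hv' : (0 : ℝ) < v := NNReal.coe_pos.mpr (pos_iff_ne_zero.mpr hv)
  set t := ε / (2 * (1 + ε) * v)
  have h2tv : 1 - 2 * t * v = (1 + ε)⁻¹ := by
    simp only [t]
    field_simp
    ring
  refine (measureReal_le_sum_sq_le (t := t) (by positivity)
    (by linarith [inv_pos.mpr (by linarith : 0 < 1 + ε)]) _).trans_eq ?_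
  rw [h2tv, log_inv]
  congr 1
  simp only [t]
  field_simp
  ring

theorem measureReal_sum_sq_le_one_sub_mul_le (hv : v ≠ 0) (hε : 0 ≤ ε) :
    (Measure.pi fun _ : ι => gaussianReal 0 v).real
        {y | ∑ i, y i ^ 2 ≤ (1 - ε) * (Fintype.card ι * v)}
      ≤ exp (-(Fintype.card ι * ε ^ 2 / 8)) := by
  have hv' : (0 : ℝ) < v := NNReal.coe_pos.mpr (pos_iff_ne_zero.mpr hv)
  set t := -(ε / (4 * v))
  refine (measureReal_sum_sq_le_le (t := t) (by simp only [t, neg_nonpos]; positivity) _).trans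
    (exp_le_exp.mpr ?_)
  have h2tv : 1 - 2 * t * v = 1 + ε / 2 := by
    simp only [t]
    field_simp
    ring
  have hta : -t * ((1 - ε) * (Fintype.card ι * v)) = Fintype.card ι * (ε * (1 - ε) / 4) := by
    simp only [t]
    field_simp
  rw [h2tv, hta]
  have := sub_sq_le_log_one_add (ε := ε / 2) (by positivity)
  have hn : (0 : ℝ) ≤ Fintype.card ι := Nat.cast_nonneg _
  nlinarith

theorem measureReal_le_abs_sum_sq_div_sub_one_le [Nonempty ι] (hv : v ≠ 0) (hε : 0 ≤ ε) :
    (Measure.pi fun _ : ι => gaussianReal 0 v).real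
        {y | ε ≤ |(∑ i, y i ^ 2) / (Fintype.card ι * v) - 1|}
      ≤ exp (-(Fintype.card ι * (ε - log (1 + ε)) / 2))
        + exp (-(Fintype.card ι * ε ^ 2 / 8)) := by
  have hnv : (0 : ℝ) < Fintype.card ι * v :=
    mul_pos (by exact_mod_cast Fintype.card_pos) (NNReal.coe_pos.mpr (pos_iff_ne_zero.mpr hv))
  refine (measureReal_mono fun y hy => ?_).trans ((measureReal_union_le _ _).trans
    (add_le_add (measureReal_one_add_mul_le_sum_sq_le hv hε)
      (measureReal_sum_sq_le_one_sub_mul_le hv hε)))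
  simp only [Set.mem_ofPred_eq, Set.mem_union] at hy ⊢
  rcases le_abs'.mp hy with h | h
  · right
    rw [← div_le_iff₀ hnv]
    linarith
  · left
    rw [← le_div_iff₀ hnv]
    linarith

end ChiSquaredTails

/-- sub-exponential concentration for Gaussian measurement
matrices. -/
theorem stmt_12 {N P : ℕ} (hN : 1 ≤ N) (x : Fin P → ℝ) (hx : x ≠ 0) (ε : ℝ) (hε : 0 ≤ ε) :
    (ε ≤ 1 →
      gaussianMatrixMeasure N P
          {ω | ε ≤ |norm2 ((Matrix.of fun i j => ω (i, j)).mulVec x) ^ 2 / norm2 x ^ 2 - 1|} ≤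
        ENNReal.ofReal (2 * Real.exp (-(N * ε ^ 2 / 8)))) ∧
    (1 < ε →
      gaussianMatrixMeasure N P
          {ω | ε ≤ |norm2 ((Matrix.of fun i j => ω (i, j)).mulVec x) ^ 2 / norm2 x ^ 2 - 1|} ≤
        ENNReal.ofReal (2 * Real.exp (-(N * ε / 8)))) := by
  have : Nonempty (Fin N) := ⟨⟨0, hN⟩⟩
  set w : ℝ≥0 := (∑ j, x j ^ 2).toNNReal * (N : ℝ≥0)⁻¹
  have hNw : (Fintype.card (Fin N) : ℝ) * w = norm2 x ^ 2 := by
    simp [w, sq_norm2, mul_comm, Finset.sum_nonneg fun j _ => sq_nonneg (x j),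
      Nat.cast_ne_zero.mpr (by omega : N ≠ 0)]
  have hw : w ≠ 0 := by
    obtain ⟨j, hj⟩ := Function.ne_iff.mp hx
    have hx2 : 0 < ∑ j, x j ^ 2 :=
      Finset.sum_pos' (fun i _ => sq_nonneg _) ⟨j, Finset.mem_univ _, pow_two_pos_of_ne_zero hj⟩
    simpa [w, hx2] using (by omega : N ≠ 0)
  have htail : (gaussianMatrixMeasure N P).real
      {ω | ε ≤ |norm2 ((Matrix.of fun i j => ω (i, j)).mulVec x) ^ 2 / norm2 x ^ 2 - 1|}
      ≤ exp (-(N * (ε - log (1 + ε)) / 2)) + exp (-(N * ε ^ 2 / 8)) := by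
    have h := measureReal_le_abs_sum_sq_div_sub_one_le (ι := Fin N) hw hε
    rw [← map_gaussianMatrixMeasure_mulVec, map_measureReal_apply (measurable_mulVec_of x)
      (by measurability), hNw] at h
    simpa [sq_norm2] using h
  have hn : (0 : ℝ) ≤ N := Nat.cast_nonneg N
  rw [← ofReal_measureReal]
  exact ⟨fun hε1 => ENNReal.ofReal_le_ofReal <|
      htail.trans (exp_add_exp_le_two_mul_exp_sq hn hε hε1),
    fun hε1 => ENNReal.ofReal_le_ofReal <| htail.trans (exp_add_exp_le_two_mul_exp hn hε1.le)⟩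
end
end

section
/- Let b > 0 and define f(a) = (1−a)²·e^{ba/(1−a)} for a ∈ [0,1). If b ≥ 2, then f(a) ≥ 1 for all a ∈ [0,1). If 0 < b < 2, then f(a) ≥ (b/2)²·e^{2−b} for all a ∈ [0,1). -/
/-!
With `t = 1 - a ∈ (0, 1]` the function reads `t ^ 2 * exp (b / t - b)`. Both bounds come from
`x ≤ exp (x - 1)`, squared: with `x = b / (2 * t)` for the general bound, and with `x = 1 / t`
(after lowering `b` to `2`, as `1 / t - 1 ≥ 0`) for `b ≥ 2`.
-/

open Real

theorem sq_le_exp_two_mul_sub_one {x : ℝ} (hx : 0 ≤ x) : x ^ 2 ≤ exp (2 * (x - 1)) := by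
  have hx_le : x ≤ exp (x - 1) := by linarith [add_one_le_exp (x - 1)]
  calc x ^ 2 ≤ exp (x - 1) ^ 2 := pow_le_pow_left₀ hx hx_le 2
    _ = exp (2 * (x - 1)) := by rw [← exp_nat_mul]; norm_num

theorem sq_half_mul_exp_two_sub_le_sq_mul_exp {b t : ℝ} (hb : 0 ≤ b) (ht : 0 < t) :
    (b / 2) ^ 2 * exp (2 - b) ≤ t ^ 2 * exp (b / t - b) :=
  calc (b / 2) ^ 2 * exp (2 - b) = t ^ 2 * (b / (2 * t)) ^ 2 * exp (2 - b) := by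
        field_simp
    _ ≤ t ^ 2 * exp (2 * (b / (2 * t) - 1)) * exp (2 - b) := by
        gcongr; exact sq_le_exp_two_mul_sub_one (by positivity)
    _ = t ^ 2 * exp (b / t - b) := by
        rw [mul_assoc, ← exp_add]; congr 2; field_simp; ring

theorem one_le_sq_mul_exp {b t : ℝ} (hb : 2 ≤ b) (ht₀ : 0 < t) (ht₁ : t ≤ 1) :
    1 ≤ t ^ 2 * exp (b / t - b) := by
  have hinv : 0 ≤ 1 / t - 1 := sub_nonneg.2 (one_le_one_div ht₀ ht₁)
  calc (1 : ℝ) = t ^ 2 * (1 / t) ^ 2 := by field_simp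
    _ ≤ t ^ 2 * exp (2 * (1 / t - 1)) := by
        gcongr; exact sq_le_exp_two_mul_sub_one (by positivity)
    _ ≤ t ^ 2 * exp (b * (1 / t - 1)) := by
        gcongr
    _ = t ^ 2 * exp (b / t - b) := by ring_nf

/-- Let `b > 0` and define `f(a) = (1-a)^2 * exp (b*a/(1-a))` for
`a ∈ [0,1)`. If `b ≥ 2` then `f(a) ≥ 1` for all `a ∈ [0,1)`; if `0 < b < 2` then
`f(a) ≥ (b/2)^2 * exp (2-b)` for all `a ∈ [0,1)`. -/
theorem stmt_13 (b : ℝ) (hb : 0 < b) :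
    (2 ≤ b → ∀ a ∈ Set.Ico (0 : ℝ) 1, 1 ≤ (1 - a) ^ 2 * Real.exp (b * a / (1 - a))) ∧
    (b < 2 → ∀ a ∈ Set.Ico (0 : ℝ) 1,
      (b / 2) ^ 2 * Real.exp (2 - b) ≤ (1 - a) ^ 2 * Real.exp (b * a / (1 - a))) := by
  have h_exponent : ∀ a < 1, b * a / (1 - a) = b / (1 - a) - b := fun a ha => by
    field_simp [(sub_pos.2 ha).ne']
    ring
  refine ⟨fun hb₂ a ⟨ha₀, ha₁⟩ => ?_, fun _ a ⟨_, ha₁⟩ => ?_⟩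
  · rw [h_exponent a ha₁]
    exact one_le_sq_mul_exp hb₂ (by linarith) (by linarith)
  · rw [h_exponent a ha₁]
    exact sq_half_mul_exp_two_sub_le_sq_mul_exp hb.le (by linarith)
end
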